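/- arXiv:2301.11740 — 2 statements merged into one kernel-verified Lean document; each statement's English description precedes it below -/
import Mathlib

section
/- Let 𝔸 = (A, ≤, →, Σ) be an implicative algebra with |A| < κ for a strongly inaccessible cardinal κ, and let W, ∈_W, =_W and the interpretation ‖·‖ be as defined below. For every formula in context φ[x₁,…,xₙ] of the language of set theory there exists r ∈ Σ such that r ≤ ⨅_{ᾱ∈Wⁿ} ⨅_{β̄∈Wⁿ} (((α₁ =_W β₁) × ⋯ × (αₙ =_W βₙ) × ‖φ[x̄]‖(ᾱ)) → ‖φ[x̄]‖(β̄)), where the product of the n+1 factors is the iterated × operation. -/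
/-
Realizers are combinatory terms obtained from `K` and `S` by bracket abstraction, and
`ev t Γ ≤ c` behaves as a Curry-style typing judgement "`t : c` in the context `Γ`", so a
realizer is checked by a typing derivation. Reflexivity and transitivity of `=_W` are proved by
Löb induction on rank, the realizer being a fixed point `θ ≤ g θ` obtained from the
self-application `λ x. g (x x)`. The theorem then follows by induction on `φ`: every connective
and quantifier is a congruence for realizability in the context
`(a₁ =_W b₁) × ⋯ × (aₙ =_W bₙ)`; atomic formulas need symmetry, transitivity and the two
congruences of `∈_W`, implication uses the symmetric context, and quantifiers extend the context
by `β =_W β`.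
-/

universe u

/-- An implicative algebra `𝔸 = (A, ≤, →, Σ)`:  a complete lattice `(A, ≤)` together with an
implication `imp` which is antitone in its first argument, monotone in its second argument and
turns infima in the second argument into infima, and a separator `Sig ⊆ A` which is upward
closed, closed under modus ponens and contains the combinators `K` and `S`. -/
structure ImplicativeAlgebra (A : Type u) [CompleteLattice A] where
  imp : A → A → A
  imp_antitone : ∀ ⦃a a' b : A⦄, a ≤ a' → imp a' b ≤ imp a b
  imp_monotone : ∀ ⦃a b b' : A⦄, b ≤ b' → imp a b ≤ imp a b'
  imp_sInf : ∀ (a : A) (S : Set A), imp a (sInf S) = ⨅ b ∈ S, imp a b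
  Sig : Set A
  Sig_upward : ∀ ⦃a b : A⦄, a ∈ Sig → a ≤ b → b ∈ Sig
  Sig_mp : ∀ ⦃a b : A⦄, imp a b ∈ Sig → a ∈ Sig → b ∈ Sig
  Sig_K : (⨅ a : A, ⨅ b : A, imp a (imp b a)) ∈ Sig
  Sig_S : (⨅ a : A, ⨅ b : A, ⨅ c : A,
      imp (imp a (imp b c)) (imp (imp a b) (imp a c))) ∈ Sig

namespace ImplicativeAlgebra

variable {A : Type u} [CompleteLattice A]

/-- `a × b := ⨅ x, ((a → (b → x)) → x)`. -/
def times (IA : ImplicativeAlgebra A) (a b : A) : A :=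
  ⨅ x : A, IA.imp (IA.imp a (IA.imp b x)) x

/-- `a + b := ⨅ x, ((a → x) → ((b → x) → x))`. -/
def plus (IA : ImplicativeAlgebra A) (a b : A) : A :=
  ⨅ x : A, IA.imp (IA.imp a x) (IA.imp (IA.imp b x) x)

/-- `∃⃗_{i} f i := ⨅ x, ((⨅ i, (f i → x)) → x)`.  (`∀⃗` is just `⨅`.) -/
def aex (IA : ImplicativeAlgebra A) {ι : Sort*} (f : ι → A) : A :=
  ⨅ x : A, IA.imp (⨅ i, IA.imp (f i) x) x

/-- `φ ⊢_{Σ[I]} ψ` iff `⨅ i, (φ i → ψ i) ∈ Σ`. -/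
def SigLe (IA : ImplicativeAlgebra A) {ι : Sort*} (f g : ι → A) : Prop :=
  (⨅ i, IA.imp (f i) (g i)) ∈ IA.Sig

/-- `φ ≡_{Σ[I]} ψ` iff `φ ⊢_{Σ[I]} ψ` and `ψ ⊢_{Σ[I]} φ`. -/
def SigEquiv (IA : ImplicativeAlgebra A) {ι : Sort*} (f g : ι → A) : Prop :=
  IA.SigLe f g ∧ IA.SigLe g f

end ImplicativeAlgebra

/-- Pre-elements of the cumulative hierarchy of partial functions valued in `A`:
an element is an `A`-labelled family of previously constructed elements, i.e. a partial
function (presented by a family indexed by its domain) from earlier elements to `A`. -/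
inductive PreW (A : Type u) : Type (u + 1)
  | mk (ι : Type u) (fam : ι → PreW A) (val : ι → A)

namespace PreW

variable {A : Type u}

/-- The (index type of the) domain of a partial function. -/
def dom : PreW A → Type u
  | ⟨ι, _, _⟩ => ι

/-- The family of elements of the domain. -/
def fam : (w : PreW A) → w.dom → PreW A
  | ⟨_, f, _⟩ => f

/-- The values in `A` of the partial function. -/
def val : (w : PreW A) → w.dom → A
  | ⟨_, _, v⟩ => v

/-- `w` is hereditarily of size `< κ`:  this carves out exactly the elements of the stage
`W_κ` of the hierarchy (for `κ` inaccessible). -/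
def HSmall (κ : Cardinal.{u}) : PreW A → Prop
  | ⟨ι, f, _⟩ => Cardinal.mk ι < κ ∧ ∀ i, HSmall κ (f i)

theorem HSmall.fam {κ : Cardinal.{u}} :
    ∀ {w : PreW A}, w.HSmall κ → ∀ i : w.dom, (w.fam i).HSmall κ
  | ⟨_, _, _⟩, h, i => h.2 i

/-- The rank of an element of the hierarchy. -/
noncomputable def rank : PreW A → Ordinal.{u}
  | ⟨_, f, _⟩ => ⨆ i, Order.succ (rank (f i))

theorem rank_lt_mk {ι : Type u} (f : ι → PreW A) (v : ι → A) (i : ι) :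
    (f i).rank < (PreW.mk ι f v).rank := by
  have h : Order.succ (f i).rank ≤ ⨆ j, Order.succ (f j).rank := Ordinal.le_iSup _ i
  have : (f i).rank < ⨆ j, Order.succ (f j).rank :=
    lt_of_lt_of_le (Order.lt_succ _) h
  simpa [rank] using this

end PreW

namespace ImplicativeAlgebra

variable {A : Type u} [CompleteLattice A]

/-- `α =_W β`, defined by recursion on rank:
`α =_W β := (α ⊆_W β) × (β ⊆_W α)` where
`α ⊆_W β := ∀⃗_{t ∈ dom α} (α t → (fam α t ∈_W β))` and
`γ ∈_W β := ∃⃗_{s ∈ dom β} (β s × (fam β s =_W γ))`. -/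
noncomputable def eqW (IA : ImplicativeAlgebra A) : PreW A → PreW A → A
  | ⟨ι₁, f₁, v₁⟩, ⟨ι₂, f₂, v₂⟩ =>
    IA.times
      (⨅ t : ι₁, IA.imp (v₁ t)
        (IA.aex fun s : ι₂ => IA.times (v₂ s) (IA.eqW (f₂ s) (f₁ t))))
      (⨅ t : ι₂, IA.imp (v₂ t)
        (IA.aex fun s : ι₁ => IA.times (v₁ s) (IA.eqW (f₁ s) (f₂ t))))
termination_by α β => max α.rank β.rank
decreasing_by
  · exact max_lt (lt_of_lt_of_le (PreW.rank_lt_mk f₂ v₂ s) (le_max_right _ _))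
      (lt_of_lt_of_le (PreW.rank_lt_mk f₁ v₁ t) (le_max_left _ _))
  · exact max_lt (lt_of_lt_of_le (PreW.rank_lt_mk f₁ v₁ s) (le_max_left _ _))
      (lt_of_lt_of_le (PreW.rank_lt_mk f₂ v₂ t) (le_max_right _ _))

/-- `α ∈_W β := ∃⃗_{s ∈ dom β} (β s × (fam β s =_W α))`. -/
noncomputable def memW (IA : ImplicativeAlgebra A) (α β : PreW A) : A :=
  IA.aex fun s : β.dom => IA.times (β.val s) (IA.eqW (β.fam s) α)

/-- `α ⊆_W β := ∀⃗_{t ∈ dom α} (α t → (fam α t ∈_W β))`. -/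
noncomputable def subW (IA : ImplicativeAlgebra A) (α β : PreW A) : A :=
  ⨅ t : α.dom, IA.imp (α.val t) (IA.memW (α.fam t) β)

end ImplicativeAlgebra

/-- The stage `W = W_κ` of the hierarchy: all hereditarily `< κ`-sized elements. -/
def WSet (A : Type u) (κ : Cardinal.{u}) : Type (u + 1) :=
  {w : PreW A // w.HSmall κ}

/-- An element of the domain of `w ∈ W`, as an element of `W`. -/
def WSet.fam {A : Type u} {κ : Cardinal.{u}} (w : WSet A κ) (i : w.1.dom) : WSet A κ :=
  ⟨w.1.fam i, w.2.fam i⟩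

/-- Formulas (in context of length `n`) of the first-order language of set theory, with
(de Bruijn-style) variables `Fin n`, binary predicates `∈` and `=`, connectives `⊥`, `∧`, `∨`,
`→` and quantifiers `∃`, `∀` (binding the last variable of the enlarged context). -/
inductive SetFormula : ℕ → Type
  | bot {n : ℕ} : SetFormula n
  | mem {n : ℕ} (i j : Fin n) : SetFormula n
  | eq {n : ℕ} (i j : Fin n) : SetFormula n
  | and {n : ℕ} (φ ψ : SetFormula n) : SetFormula n
  | or {n : ℕ} (φ ψ : SetFormula n) : SetFormula n
  | imp {n : ℕ} (φ ψ : SetFormula n) : SetFormula n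
  | ex {n : ℕ} (φ : SetFormula (n + 1)) : SetFormula n
  | all {n : ℕ} (φ : SetFormula (n + 1)) : SetFormula n

namespace SetFormula

/-- Renaming of variables (since the only terms of the language of set theory are variables,
substitution is a special case). -/
def rename : {n m : ℕ} → (Fin n → Fin m) → SetFormula n → SetFormula m
  | _, _, _, .bot => .bot
  | _, _, f, .mem i j => .mem (f i) (f j)
  | _, _, f, .eq i j => .eq (f i) (f j)
  | _, _, f, .and φ ψ => .and (φ.rename f) (ψ.rename f)
  | _, _, f, .or φ ψ => .or (φ.rename f) (ψ.rename f)
  | _, _, f, .imp φ ψ => .imp (φ.rename f) (ψ.rename f)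
  | _, _, f, .ex φ => .ex (φ.rename (Fin.snoc (Fin.castSucc ∘ f) (Fin.last _)))
  | _, _, f, .all φ => .all (φ.rename (Fin.snoc (Fin.castSucc ∘ f) (Fin.last _)))

/-- Universal closure `∀x₁ … ∀xₙ φ` of a formula in context of length `n`. -/
def allClose : {n : ℕ} → SetFormula n → SetFormula 0
  | 0, φ => φ
  | _ + 1, φ => allClose (.all φ)

end SetFormula

namespace ImplicativeAlgebra

variable {A : Type u} [CompleteLattice A]

/-- The interpretation `‖φ[x₁,…,xₙ]‖ : Wⁿ → A` of a formula in context, by recursion on the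
structure of `φ`:  atomic formulas are interpreted by `∈_W` and `=_W`, `∧` by `×`, `∨` by `+`,
`→` by `→`, `∃` by `∃⃗` over `W` and `∀` by `∀⃗` (i.e. `⨅`) over `W`. -/
noncomputable def interp (IA : ImplicativeAlgebra A) (κ : Cardinal.{u}) :
    {n : ℕ} → SetFormula n → (Fin n → WSet A κ) → A
  | _, .bot, _ => ⊥
  | _, .mem i j, v => IA.memW (v i).1 (v j).1
  | _, .eq i j, v => IA.eqW (v i).1 (v j).1
  | _, .and φ ψ, v => IA.times (IA.interp κ φ v) (IA.interp κ ψ v)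
  | _, .or φ ψ, v => IA.plus (IA.interp κ φ v) (IA.interp κ ψ v)
  | _, .imp φ ψ, v => IA.imp (IA.interp κ φ v) (IA.interp κ ψ v)
  | _, .ex φ, v => IA.aex fun β : WSet A κ => IA.interp κ φ (Fin.snoc v β)
  | _, .all φ, v => ⨅ β : WSet A κ, IA.interp κ φ (Fin.snoc v β)

end ImplicativeAlgebra

theorem PreW.rank_fam_lt {A : Type u} (α : PreW A) (i : α.dom) : (α.fam i).rank < α.rank := by
  cases α with | mk ι f v => exact PreW.rank_lt_mk f v i

namespace ImplicativeAlgebra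

variable {A : Type u} [CompleteLattice A] (IA : ImplicativeAlgebra A)

def ap (a b : A) : A := sInf {c | a ≤ IA.imp b c}

theorem le_imp_ap (a b : A) : a ≤ IA.imp b (IA.ap a b) := by
  rw [ap, IA.imp_sInf]
  exact le_iInf₂ fun _ hc => hc

theorem ap_le_of_le_imp {r x a b : A} (hr : r ≤ IA.imp a b) (hx : x ≤ a) : IA.ap r x ≤ b :=
  sInf_le (hr.trans (IA.imp_antitone hx))

theorem ap_mono {a a' b b' : A} (ha : a ≤ a') (hb : b ≤ b') : IA.ap a b ≤ IA.ap a' b' :=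
  IA.ap_le_of_le_imp (ha.trans (IA.le_imp_ap a' b')) hb

theorem ap_mem {a b : A} (ha : a ∈ IA.Sig) (hb : b ∈ IA.Sig) : IA.ap a b ∈ IA.Sig :=
  IA.Sig_mp (IA.Sig_upward ha (IA.le_imp_ap a b)) hb

def Kc : A := ⨅ a : A, ⨅ b : A, IA.imp a (IA.imp b a)

def Sc : A := ⨅ a : A, ⨅ b : A, ⨅ c : A,
  IA.imp (IA.imp a (IA.imp b c)) (IA.imp (IA.imp a b) (IA.imp a c))

theorem Kc_le (a b : A) : IA.Kc ≤ IA.imp a (IA.imp b a) :=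
  iInf₂_le (f := fun a b => IA.imp a (IA.imp b a)) a b

theorem ap_ap_Kc_le (a b : A) : IA.ap (IA.ap IA.Kc a) b ≤ a :=
  IA.ap_le_of_le_imp (IA.ap_le_of_le_imp (IA.Kc_le a b) le_rfl) le_rfl

theorem ap_ap_ap_Sc_le (a b c : A) :
    IA.ap (IA.ap (IA.ap IA.Sc a) b) c ≤ IA.ap (IA.ap a c) (IA.ap b c) := by
  have hS : IA.Sc ≤ IA.imp (IA.imp c (IA.imp (IA.ap b c) (IA.ap (IA.ap a c) (IA.ap b c))))
      (IA.imp (IA.imp c (IA.ap b c)) (IA.imp c (IA.ap (IA.ap a c) (IA.ap b c)))) :=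
    (iInf₂_le (f := fun a b => ⨅ c : A, IA.imp (IA.imp a (IA.imp b c))
      (IA.imp (IA.imp a b) (IA.imp a c))) _ _).trans (iInf_le _ _)
  have ha : a ≤ IA.imp c (IA.imp (IA.ap b c) (IA.ap (IA.ap a c) (IA.ap b c))) :=
    (IA.le_imp_ap a c).trans (IA.imp_monotone (IA.le_imp_ap _ _))
  exact IA.ap_le_of_le_imp (IA.ap_le_of_le_imp (IA.ap_le_of_le_imp hS ha) (IA.le_imp_ap b c)) le_rfl

end ImplicativeAlgebra

/-- Combinatory terms with de Bruijn variables and parameters in `A`. -/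
inductive ImplicativeAlgebra.Term (A : Type u) : Type u
  | K
  | S
  | var (k : ℕ)
  | const (a : A)
  | app (t u : ImplicativeAlgebra.Term A)

namespace ImplicativeAlgebra.Term

variable {A : Type u}

/-- Bracket abstraction of the variable `0`. -/
def abs : Term A → Term A
  | K => app K K
  | S => app K S
  | var 0 => app (app S K) K
  | var (k + 1) => app K (var k)
  | const a => app K (const a)
  | app t u => app (app S t.abs) u.abs

def lift : Term A → Term A
  | K => K
  | S => S
  | var k => var (k + 1)
  | const a => const a
  | app t u => app t.lift u.lift

def ConstsIn (s : Set A) : Term A → Prop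
  | K => True
  | S => True
  | var _ => True
  | const a => a ∈ s
  | app t u => t.ConstsIn s ∧ u.ConstsIn s

variable {s : Set A}

@[simp] theorem constsIn_abs {t : Term A} : t.abs.ConstsIn s ↔ t.ConstsIn s := by
  induction t with
  | var k => cases k <;> simp [abs, ConstsIn]
  | app t u iht ihu => simp [abs, ConstsIn, iht, ihu]
  | _ => simp [abs, ConstsIn]

@[simp] theorem constsIn_lift {t : Term A} : t.lift.ConstsIn s ↔ t.ConstsIn s := by
  induction t with
  | app t u iht ihu => simp [lift, ConstsIn, iht, ihu]
  | _ => simp [lift, ConstsIn]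

abbrev pair (t u : Term A) : Term A := (((var 0).app t.lift).app u.lift).abs

abbrev fst (t : Term A) : Term A := t.app K

abbrev snd (t : Term A) : Term A := t.app (var 0).abs.abs

abbrev inl (t : Term A) : Term A := ((var 1).app t.lift.lift).abs.abs

abbrev inr (t : Term A) : Term A := ((var 0).app t.lift.lift).abs.abs

abbrev pack (t : Term A) : Term A := ((var 0).app t.lift).abs

end ImplicativeAlgebra.Term

namespace ImplicativeAlgebra

open Term (var const)

variable {A : Type u} [CompleteLattice A] (IA : ImplicativeAlgebra A)

def ev : Term A → List A → A
  | .K, _ => IA.Kc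
  | .S, _ => IA.Sc
  | .var k, Γ => Γ.getD k IA.Kc
  | .const a, _ => a
  | .app t u, Γ => IA.ap (ev t Γ) (ev u Γ)

theorem ev_mem {t : Term A} (ht : t.ConstsIn IA.Sig) : IA.ev t [] ∈ IA.Sig := by
  induction t with
  | K => exact IA.Sig_K
  | S => exact IA.Sig_S
  | var k => exact IA.Sig_K
  | const a => exact ht
  | app t u iht ihu => exact IA.ap_mem (iht ht.1) (ihu ht.2)

theorem ap_ev_abs_le (t : Term A) (Γ : List A) (a : A) :
    IA.ap (IA.ev t.abs Γ) a ≤ IA.ev t (a :: Γ) := by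
  induction t with
  | var k =>
    cases k with
    | zero => exact (IA.ap_ap_ap_Sc_le _ _ _).trans (IA.ap_ap_Kc_le _ _)
    | succ k => exact IA.ap_ap_Kc_le _ _
  | app t u iht ihu => exact (IA.ap_ap_ap_Sc_le _ _ _).trans (IA.ap_mono iht ihu)
  | _ => exact IA.ap_ap_Kc_le _ _

theorem ev_lift (t : Term A) (Γ : List A) (a : A) : IA.ev t.lift (a :: Γ) = IA.ev t Γ := by
  induction t with
  | app t u iht ihu => exact congrArg₂ IA.ap iht ihu
  | _ => rfl

variable {IA} {t u : Term A} {Γ : List A} {a b c : A}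

theorem ev_app_le (ht : IA.ev t Γ ≤ IA.imp a b) (hu : IA.ev u Γ ≤ a) :
    IA.ev (t.app u) Γ ≤ b :=
  IA.ap_le_of_le_imp ht hu

theorem ev_abs_le (ht : IA.ev t (a :: Γ) ≤ b) : IA.ev t.abs Γ ≤ IA.imp a b :=
  (IA.le_imp_ap _ a).trans (IA.imp_monotone ((IA.ap_ev_abs_le t Γ a).trans ht))

theorem ev_pair_le (ht : IA.ev t Γ ≤ a) (hu : IA.ev u Γ ≤ b) :
    IA.ev (t.pair u) Γ ≤ IA.times a b :=
  le_iInf fun _ => ev_abs_le <|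
    ev_app_le (ev_app_le le_rfl ((IA.ev_lift t Γ _).trans_le ht)) ((IA.ev_lift u Γ _).trans_le hu)

theorem ev_app_le_of_times (ht : IA.ev t Γ ≤ IA.times a b)
    (hu : IA.ev u Γ ≤ IA.imp a (IA.imp b c)) :
    IA.ev (t.app u) Γ ≤ c :=
  ev_app_le (ht.trans (iInf_le _ c)) hu

theorem ev_fst_le (ht : IA.ev t Γ ≤ IA.times a b) : IA.ev t.fst Γ ≤ a :=
  ev_app_le_of_times ht (IA.Kc_le a b)

theorem ev_snd_le (ht : IA.ev t Γ ≤ IA.times a b) : IA.ev t.snd Γ ≤ b :=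
  ev_app_le_of_times ht (ev_abs_le (ev_abs_le le_rfl))

theorem ev_inl_le (ht : IA.ev t Γ ≤ a) : IA.ev t.inl Γ ≤ IA.plus a b :=
  le_iInf fun _ => ev_abs_le <| ev_abs_le <| ev_app_le le_rfl <| by
    rwa [ev_lift, ev_lift]

theorem ev_inr_le (ht : IA.ev t Γ ≤ b) : IA.ev t.inr Γ ≤ IA.plus a b :=
  le_iInf fun _ => ev_abs_le <| ev_abs_le <| ev_app_le le_rfl <| by
    rwa [ev_lift, ev_lift]

theorem ev_app_app_le_of_plus {v : Term A} (ht : IA.ev t Γ ≤ IA.plus a b)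
    (hu : IA.ev u Γ ≤ IA.imp a c) (hv : IA.ev v Γ ≤ IA.imp b c) :
    IA.ev ((t.app u).app v) Γ ≤ c :=
  ev_app_le (ev_app_le (ht.trans (iInf_le _ c)) hu) hv

theorem ev_pack_le {ι : Sort*} {f : ι → A} (i : ι) (ht : IA.ev t Γ ≤ f i) :
    IA.ev t.pack Γ ≤ IA.aex f :=
  le_iInf fun _ => ev_abs_le <| ev_app_le (iInf_le _ i) ((IA.ev_lift t Γ _).trans_le ht)

theorem ev_app_le_of_aex {ι : Sort*} {f : ι → A} (ht : IA.ev t Γ ≤ IA.aex f)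
    (hu : ∀ i, IA.ev u Γ ≤ IA.imp (f i) c) : IA.ev (t.app u) Γ ≤ c :=
  ev_app_le (ht.trans (iInf_le _ c)) (le_iInf hu)

variable (IA) in
def Realized {ι : Sort*} (f : ι → A) : Prop := ∃ r ∈ IA.Sig, ∀ i, r ≤ f i

theorem realized_of_ev {ι : Sort*} {f : ι → A} (t : Term A) (ht : t.ConstsIn IA.Sig)
    (h : ∀ i, IA.ev t [] ≤ f i) : IA.Realized f :=
  ⟨_, IA.ev_mem ht, h⟩

theorem Realized.comp {ι κ : Sort*} {f : ι → A} (h : IA.Realized f) (e : κ → ι) :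
    IA.Realized (f ∘ e) :=
  let ⟨r, hr, hf⟩ := h; ⟨r, hr, fun k => hf (e k)⟩

theorem exists_le_ap_self {g : A} (hg : g ∈ IA.Sig) : ∃ θ ∈ IA.Sig, θ ≤ IA.ap g θ := by
  let w : Term A := ((const g).app ((var 0).app (var 0))).abs
  have hw : IA.ev w [] ∈ IA.Sig := IA.ev_mem (by simpa [w, Term.ConstsIn] using hg)
  exact ⟨_, IA.ap_mem hw hw, IA.ap_ev_abs_le _ [] _⟩

/-- Löb induction: a realizer of "`P` holds below `i` implies `P i`" yields, through a fixed
point, a realizer of `P`. -/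
theorem realized_of_wellFounded {ι : Sort*} {r : ι → ι → Prop} (hr : WellFounded r)
    {P : ι → A}
    (h : IA.Realized fun i => IA.imp (⨅ j, ⨅ (_ : r j i), P j) (P i)) : IA.Realized P := by
  obtain ⟨g, hg, hgP⟩ := h
  obtain ⟨θ, hθ, hθg⟩ := exists_le_ap_self hg
  exact ⟨θ, hθ, fun i => hr.induction i fun i ih =>
    hθg.trans (IA.ap_le_of_le_imp (hgP i) (le_iInf₂ ih))⟩

theorem eqW_eq_times_subW (α β : PreW A) :
    IA.eqW α β = IA.times (IA.subW α β) (IA.subW β α) := by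
  cases α; cases β; rw [eqW]; rfl

theorem realized_eqW_refl : IA.Realized fun α : PreW A => IA.eqW α α := by
  refine realized_of_wellFounded (r := fun β α => β.rank < α.rank)
    (InvImage.wf _ wellFounded_lt) ?_
  let half : Term A := ((var 0).pair (var 1)).pack.abs
  refine realized_of_ev (half.pair half).abs (by simp [half, Term.ConstsIn]) fun α => ?_
  have h : IA.ev half [⨅ β, ⨅ (_ : β.rank < α.rank), IA.eqW β β] ≤ IA.subW α α :=
    le_iInf fun t => ev_abs_le <| ev_pack_le t <|
      ev_pair_le le_rfl (iInf₂_le (f := fun β (_ : β.rank < α.rank) => IA.eqW β β) _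
        (α.rank_fam_lt t))
  exact ev_abs_le ((eqW_eq_times_subW α α).symm ▸ ev_pair_le h h)

theorem subW_le_imp (α β : PreW A) (t : α.dom) :
    IA.subW α β ≤ IA.imp (α.val t) (IA.memW (α.fam t) β) :=
  iInf_le (fun t => IA.imp (α.val t) (IA.memW (α.fam t) β)) t

theorem exists_eqW_symm : ∃ r ∈ IA.Sig, ∀ α β : PreW A,
    r ≤ IA.imp (IA.eqW α β) (IA.eqW β α) := by
  refine ⟨IA.ev ((var 0).snd.pair (var 0).fst).abs [], IA.ev_mem (by simp [Term.ConstsIn]),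
    fun α β => ?_⟩
  rw [eqW_eq_times_subW β α]
  exact ev_abs_le (ev_pair_le (ev_snd_le (eqW_eq_times_subW α β).le)
    (ev_fst_le (eqW_eq_times_subW α β).le))

theorem exists_memW_transport : ∃ G ∈ IA.Sig, ∀ x β γ : PreW A,
    G ≤ IA.imp (⨅ u, ⨅ w, IA.imp (IA.eqW (γ.fam w) (β.fam u))
        (IA.imp (IA.eqW (β.fam u) x) (IA.eqW (γ.fam w) x)))
      (IA.imp (IA.subW β γ) (IA.imp (IA.memW x β) (IA.memW x γ))) := by
  -- `λ r s m. m (λ z. z (λ v e. s v (λ z'. z' (λ v' e'. pack (pair v' (r e' e))))))`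
  let inner : Term A := ((var 1).pair (((var 8).app (var 0)).app (var 3))).pack.abs.abs
  let outer : Term A := (((var 4).app (var 1)).app ((var 0).app inner).abs).abs.abs
  refine ⟨IA.ev ((var 0).app ((var 0).app outer).abs).abs.abs.abs [],
    IA.ev_mem (by simp [inner, outer, Term.ConstsIn]), fun x β γ => ?_⟩
  refine ev_abs_le <| ev_abs_le <| ev_abs_le <| ev_app_le_of_aex le_rfl fun u => ?_
  refine ev_abs_le <| ev_app_le_of_times le_rfl <| ev_abs_le <| ev_abs_le ?_
  refine ev_app_le_of_aex (ev_app_le (subW_le_imp β γ u) le_rfl) fun w => ?_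
  refine ev_abs_le <| ev_app_le_of_times le_rfl <| ev_abs_le <| ev_abs_le ?_
  exact ev_pack_le w <| ev_pair_le le_rfl <| ev_app_le (ev_app_le (iInf₂_le (f := fun u w =>
    IA.imp (IA.eqW (γ.fam w) (β.fam u)) (IA.imp (IA.eqW (β.fam u) x) (IA.eqW (γ.fam w) x))) u w)
      le_rfl) le_rfl

theorem exists_eqW_trans : ∃ T ∈ IA.Sig, ∀ α β γ : PreW A,
    T ≤ IA.imp (IA.eqW α β) (IA.imp (IA.eqW β γ) (IA.eqW α γ)) := by
  obtain ⟨G, hG, hGle⟩ := exists_memW_transport (IA := IA)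
  let m : PreW A × PreW A × PreW A → Ordinal :=
    fun p => max (max p.1.rank p.2.1.rank) p.2.2.rank
  have hm : ∀ (α β γ : PreW A) (t : α.dom) (u : β.dom) (w : γ.dom),
      m (α.fam t, β.fam u, γ.fam w) < m (α, β, γ) ∧
        m (γ.fam w, β.fam u, α.fam t) < m (α, β, γ) := by
    intro α β γ t u w
    have hα : (α.fam t).rank < m (α, β, γ) :=
      (α.rank_fam_lt t).trans_le (le_max_of_le_left (le_max_left _ _))
    have hβ : (β.fam u).rank < m (α, β, γ) :=
      (β.rank_fam_lt u).trans_le (le_max_of_le_left (le_max_right _ _))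
    have hγ : (γ.fam w).rank < m (α, β, γ) := (γ.rank_fam_lt w).trans_le (le_max_right _ _)
    exact ⟨max_lt (max_lt hα hβ) hγ, max_lt (max_lt hγ hβ) hα⟩
  suffices h : IA.Realized fun p : PreW A × PreW A × PreW A =>
      IA.imp (IA.eqW p.1 p.2.1) (IA.imp (IA.eqW p.2.1 p.2.2) (IA.eqW p.1 p.2.2)) by
    obtain ⟨T, hT, hTle⟩ := h
    exact ⟨T, hT, fun α β γ => hTle (α, β, γ)⟩
  refine realized_of_wellFounded (r := fun q p => m q < m p) (InvImage.wf m wellFounded_lt) ?_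
  -- `λ ih p q. pair (λ v. G ih (fst q) (fst p v)) (λ v. G ih (snd p) (snd q v))`
  let left : Term A :=
    ((((const G).app (var 3)).app (var 1).fst).app (((var 2).fst).app (var 0))).abs
  let right : Term A :=
    ((((const G).app (var 3)).app (var 2).snd).app (((var 1).snd).app (var 0))).abs
  refine realized_of_ev (left.pair right).abs.abs.abs
    (by simp [left, right, Term.ConstsIn, hG]) ?_
  rintro ⟨α, β, γ⟩
  refine ev_abs_le <| ev_abs_le <| ev_abs_le ?_
  rw [eqW_eq_times_subW α γ]
  refine ev_pair_le (le_iInf fun t => ev_abs_le ?_) (le_iInf fun t => ev_abs_le ?_)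
  · refine ev_app_le (ev_app_le (ev_app_le (hGle (α.fam t) β γ) ?_)
      (ev_fst_le (eqW_eq_times_subW β γ).le))
      (ev_app_le ((ev_fst_le (eqW_eq_times_subW α β).le).trans (subW_le_imp α β t)) le_rfl)
    exact le_iInf₂ fun u w => iInf₂_le (γ.fam w, β.fam u, α.fam t) (hm α β γ t u w).2
  · refine ev_app_le (ev_app_le (ev_app_le (hGle (γ.fam t) β α) ?_)
      (ev_snd_le (eqW_eq_times_subW α β).le))
      (ev_app_le ((ev_snd_le (eqW_eq_times_subW β γ).le).trans (subW_le_imp γ β t)) le_rfl)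
    exact le_iInf₂ fun u w => iInf₂_le (α.fam w, β.fam u, γ.fam t) (hm α β γ w u t).1

theorem exists_memW_congr_left : ∃ M ∈ IA.Sig, ∀ α α' β : PreW A,
    M ≤ IA.imp (IA.eqW α α') (IA.imp (IA.memW α β) (IA.memW α' β)) := by
  obtain ⟨T, hT, hTle⟩ := exists_eqW_trans (IA := IA)
  -- `λ e m. m (λ z. z (λ v e'. pack (pair v (T e' e))))`
  let inner : Term A := ((var 1).pair (((const T).app (var 0)).app (var 4))).pack.abs.abs
  refine ⟨IA.ev ((var 0).app ((var 0).app inner).abs).abs.abs [],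
    IA.ev_mem (by simp [inner, Term.ConstsIn, hT]), fun α α' β => ?_⟩
  refine ev_abs_le <| ev_abs_le <| ev_app_le_of_aex le_rfl fun s => ?_
  refine ev_abs_le <| ev_app_le_of_times le_rfl <| ev_abs_le <| ev_abs_le ?_
  exact ev_pack_le s <| ev_pair_le le_rfl <| ev_app_le (ev_app_le (hTle _ _ _) le_rfl) le_rfl

theorem exists_memW_congr_right : ∃ M ∈ IA.Sig, ∀ α β β' : PreW A,
    M ≤ IA.imp (IA.eqW β β') (IA.imp (IA.memW α β) (IA.memW α β')) := by
  obtain ⟨T, hT, hTle⟩ := exists_eqW_trans (IA := IA)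
  obtain ⟨G, hG, hGle⟩ := exists_memW_transport (IA := IA)
  refine ⟨IA.ev ((((const G).app (const T)).app (var 1).fst).app (var 0)).abs.abs [],
    IA.ev_mem (by simp [Term.ConstsIn, hT, hG]), fun α β β' => ?_⟩
  exact ev_abs_le <| ev_abs_le <| ev_app_le (ev_app_le (ev_app_le (hGle α β β')
    (le_iInf₂ fun _ _ => hTle _ _ _)) (ev_fst_le (eqW_eq_times_subW β β').le)) le_rfl

section Congruence

variable {ι : Sort*} {e e' a a' b b' : ι → A}

theorem realized_imp_imp_self : IA.Realized fun i => IA.imp (e i) (IA.imp (a i) (a i)) :=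
  realized_of_ev (var 0).abs.abs (by simp [Term.ConstsIn]) fun _ => ev_abs_le (ev_abs_le le_rfl)

theorem Realized.imp_trans (h : IA.Realized fun i => IA.imp (e i) (e' i))
    (h' : IA.Realized fun i => IA.imp (e' i) (a i)) :
    IA.Realized fun i => IA.imp (e i) (a i) := by
  obtain ⟨r, hr, hrle⟩ := h
  obtain ⟨r', hr', hr'le⟩ := h'
  refine realized_of_ev ((const r').app ((const r).app (var 0))).abs
    (by simp [Term.ConstsIn, hr, hr']) fun i => ?_
  exact ev_abs_le (ev_app_le (hr'le i) (ev_app_le (hrle i) le_rfl))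

theorem Realized.cut (h : IA.Realized fun i => IA.imp (IA.times (e i) (a i)) (b i))
    (ha : IA.Realized a) : IA.Realized fun i => IA.imp (e i) (b i) := by
  obtain ⟨r, hr, hrle⟩ := h
  obtain ⟨c, hc, hcle⟩ := ha
  refine realized_of_ev ((const r).app ((var 0).pair (const c))).abs
    (by simp [Term.ConstsIn, hr, hc]) fun i => ?_
  exact ev_abs_le (ev_app_le (hrle i) (ev_pair_le le_rfl (hcle i)))

theorem Realized.uncurry (h : IA.Realized fun i => IA.imp (e i) (IA.imp (a i) (b i)))
    (h' : IA.Realized fun i => IA.imp (e' i) (IA.times (e i) (a i))) :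
    IA.Realized fun i => IA.imp (e' i) (b i) := by
  obtain ⟨r, hr, hrle⟩ := h
  obtain ⟨r', hr', hr'le⟩ := h'
  refine realized_of_ev (((const r').app (var 0)).app (const r)).abs
    (by simp [Term.ConstsIn, hr, hr']) fun i => ?_
  exact ev_abs_le (ev_app_le_of_times (ev_app_le (hr'le i) le_rfl) (hrle i))

theorem realized_times_congr (ha : IA.Realized fun i => IA.imp (e i) (IA.imp (a i) (a' i)))
    (hb : IA.Realized fun i => IA.imp (e i) (IA.imp (b i) (b' i))) :
    IA.Realized fun i =>
      IA.imp (e i) (IA.imp (IA.times (a i) (b i)) (IA.times (a' i) (b' i))) := by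
  obtain ⟨r, hr, hrle⟩ := ha
  obtain ⟨s, hs, hsle⟩ := hb
  refine realized_of_ev ((var 0).app ((((const r).app (var 3)).app (var 1)).pair
      (((const s).app (var 3)).app (var 0))).abs.abs).abs.abs
    (by simp [Term.ConstsIn, hr, hs]) fun i => ?_
  refine ev_abs_le <| ev_abs_le <| ev_app_le_of_times le_rfl <| ev_abs_le <| ev_abs_le ?_
  exact ev_pair_le (ev_app_le (ev_app_le (hrle i) le_rfl) le_rfl)
    (ev_app_le (ev_app_le (hsle i) le_rfl) le_rfl)

theorem realized_plus_congr (ha : IA.Realized fun i => IA.imp (e i) (IA.imp (a i) (a' i)))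
    (hb : IA.Realized fun i => IA.imp (e i) (IA.imp (b i) (b' i))) :
    IA.Realized fun i =>
      IA.imp (e i) (IA.imp (IA.plus (a i) (b i)) (IA.plus (a' i) (b' i))) := by
  obtain ⟨r, hr, hrle⟩ := ha
  obtain ⟨s, hs, hsle⟩ := hb
  refine realized_of_ev (((var 0).app (((const r).app (var 2)).app (var 0)).inl.abs).app
      (((const s).app (var 2)).app (var 0)).inr.abs).abs.abs
    (by simp [Term.ConstsIn, hr, hs]) fun i => ?_
  refine ev_abs_le <| ev_abs_le <| ev_app_app_le_of_plus le_rfl ?_ ?_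
  · exact ev_abs_le (ev_inl_le (ev_app_le (ev_app_le (hrle i) le_rfl) le_rfl))
  · exact ev_abs_le (ev_inr_le (ev_app_le (ev_app_le (hsle i) le_rfl) le_rfl))

theorem realized_imp_congr (ha : IA.Realized fun i => IA.imp (e i) (IA.imp (a' i) (a i)))
    (hb : IA.Realized fun i => IA.imp (e i) (IA.imp (b i) (b' i))) :
    IA.Realized fun i =>
      IA.imp (e i) (IA.imp (IA.imp (a i) (b i)) (IA.imp (a' i) (b' i))) := by
  obtain ⟨r, hr, hrle⟩ := ha
  obtain ⟨s, hs, hsle⟩ := hb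
  refine realized_of_ev (((const s).app (var 2)).app
      ((var 1).app (((const r).app (var 2)).app (var 0)))).abs.abs.abs
    (by simp [Term.ConstsIn, hr, hs]) fun i => ?_
  refine ev_abs_le <| ev_abs_le <| ev_abs_le <| ev_app_le (ev_app_le (hsle i) le_rfl) ?_
  exact ev_app_le le_rfl (ev_app_le (ev_app_le (hrle i) le_rfl) le_rfl)

end Congruence

section Quantifiers

variable {ι κ : Type*} {e : ι → A} {F F' : ι → κ → A}

theorem realized_aex_congr
    (h : IA.Realized fun p : ι × κ => IA.imp (e p.1) (IA.imp (F p.1 p.2) (F' p.1 p.2))) :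
    IA.Realized fun i => IA.imp (e i) (IA.imp (IA.aex (F i)) (IA.aex (F' i))) := by
  obtain ⟨r, hr, hrle⟩ := h
  refine realized_of_ev ((var 0).app (((const r).app (var 2)).app (var 0)).pack.abs).abs.abs
    (by simp [Term.ConstsIn, hr]) fun i => ?_
  refine ev_abs_le <| ev_abs_le <| ev_app_le_of_aex le_rfl fun k => ev_abs_le ?_
  exact ev_pack_le k (ev_app_le (ev_app_le (hrle (i, k)) le_rfl) le_rfl)

theorem realized_iInf_congr
    (h : IA.Realized fun p : ι × κ => IA.imp (e p.1) (IA.imp (F p.1 p.2) (F' p.1 p.2))) :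
    IA.Realized fun i => IA.imp (e i) (IA.imp (⨅ k, F i k) (⨅ k, F' i k)) := by
  obtain ⟨r, hr, hrle⟩ := h
  refine realized_of_ev (((const r).app (var 1)).app (var 0)).abs.abs
    (by simp [Term.ConstsIn, hr]) fun i => ?_
  exact ev_abs_le <| ev_abs_le <| le_iInf fun k =>
    ev_app_le (ev_app_le (hrle (i, k)) le_rfl) (iInf_le _ k)

end Quantifiers

section Atomic

variable {ι : Sort*} {e : ι → A} {x x' y y' : ι → PreW A}

theorem realized_memW_congr (hx : IA.Realized fun i => IA.imp (e i) (IA.eqW (x i) (x' i)))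
    (hy : IA.Realized fun i => IA.imp (e i) (IA.eqW (y i) (y' i))) :
    IA.Realized fun i => IA.imp (e i) (IA.imp (IA.memW (x i) (y i)) (IA.memW (x' i) (y' i))) := by
  obtain ⟨M, hM, hMle⟩ := exists_memW_congr_left (IA := IA)
  obtain ⟨M', hM', hM'le⟩ := exists_memW_congr_right (IA := IA)
  obtain ⟨p, hp, hple⟩ := hx
  obtain ⟨q, hq, hqle⟩ := hy
  refine realized_of_ev (((const M').app ((const q).app (var 1))).app
      (((const M).app ((const p).app (var 1))).app (var 0))).abs.abs
    (by simp [Term.ConstsIn, hM, hM', hp, hq]) fun i => ?_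
  exact ev_abs_le <| ev_abs_le <| ev_app_le (ev_app_le (hM'le _ _ _) (ev_app_le (hqle i) le_rfl))
    (ev_app_le (ev_app_le (hMle _ _ _) (ev_app_le (hple i) le_rfl)) le_rfl)

theorem realized_eqW_congr (hx : IA.Realized fun i => IA.imp (e i) (IA.eqW (x i) (x' i)))
    (hy : IA.Realized fun i => IA.imp (e i) (IA.eqW (y i) (y' i))) :
    IA.Realized fun i => IA.imp (e i) (IA.imp (IA.eqW (x i) (y i)) (IA.eqW (x' i) (y' i))) := by
  obtain ⟨S, hS, hSle⟩ := exists_eqW_symm (IA := IA)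
  obtain ⟨T, hT, hTle⟩ := exists_eqW_trans (IA := IA)
  obtain ⟨p, hp, hple⟩ := hx
  obtain ⟨q, hq, hqle⟩ := hy
  -- `λ c z. T (T (S (p c)) z) (q c)`
  refine realized_of_ev (((const T).app (((const T).app ((const S).app ((const p).app (var 1)))).app
      (var 0))).app ((const q).app (var 1))).abs.abs
    (by simp [Term.ConstsIn, hS, hT, hp, hq]) fun i => ?_
  refine ev_abs_le <| ev_abs_le <| ev_app_le (ev_app_le (hTle (x' i) (y i) (y' i)) ?_)
    (ev_app_le (hqle i) le_rfl)
  exact ev_app_le (ev_app_le (hTle (x' i) (x i) (y i))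
    (ev_app_le (hSle _ _) (ev_app_le (hple i) le_rfl))) le_rfl

end Atomic

variable (IA) in
def iterTimes : {n : ℕ} → (Fin n → A) → A
  | 0, _ => ⊤
  | _ + 1, g => IA.times (iterTimes fun i => g i.castSucc) (g (Fin.last _))

theorem realized_iterTimes_proj : ∀ {n : ℕ} (k : Fin n),
    IA.Realized fun g : Fin n → A => IA.imp (IA.iterTimes g) (g k)
  | 0, k => k.elim0
  | n + 1, k => by
    induction k using Fin.lastCases with
    | last =>
      exact realized_of_ev (var 0).snd.abs (by simp [Term.ConstsIn])
        fun g => ev_abs_le (ev_snd_le le_rfl)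
    | cast j =>
      obtain ⟨r, hr, hrle⟩ := realized_iterTimes_proj j
      exact realized_of_ev ((const r).app (var 0).fst).abs (by simp [Term.ConstsIn, hr])
        fun g => ev_abs_le (ev_app_le (hrle fun i => g i.castSucc) (ev_fst_le le_rfl))

theorem realized_iterTimes_map {ι : Sort*} : ∀ {n : ℕ} {g h : ι → Fin n → A},
    (∀ k, IA.Realized fun i => IA.imp (g i k) (h i k)) →
      IA.Realized fun i => IA.imp (IA.iterTimes (g i)) (IA.iterTimes (h i))
  | 0, _, _, _ => realized_of_ev (var 0).abs (by simp [Term.ConstsIn]) fun _ => ev_abs_le le_top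
  | n + 1, g, h, hgh => by
    obtain ⟨r, hr, hrle⟩ := realized_iterTimes_map fun k => hgh k.castSucc
    obtain ⟨s, hs, hsle⟩ := hgh (Fin.last n)
    refine realized_of_ev (((const r).app (var 0).fst).pair ((const s).app (var 0).snd)).abs
      (by simp [Term.ConstsIn, hr, hs]) fun i => ?_
    exact ev_abs_le (ev_pair_le (ev_app_le (hrle i) (ev_fst_le le_rfl))
      (ev_app_le (hsle i) (ev_snd_le le_rfl)))

theorem realized_foldr_times : ∀ n : ℕ, IA.Realized fun p : (Fin n → A) × A =>
    IA.imp ((List.ofFn p.1).foldr IA.times p.2) (IA.times (IA.iterTimes p.1) p.2)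
  | 0 => realized_of_ev (Term.K.pair (var 0)).abs (by simp [Term.ConstsIn])
      fun _ => ev_abs_le (ev_pair_le le_top le_rfl)
  | n + 1 => by
    obtain ⟨r, hr, hrle⟩ := realized_foldr_times n
    let w : Term A := (const r).app (var 0)
    refine realized_of_ev ((w.fst.pair w.snd.fst).pair w.snd.snd).abs
      (by simp [w, Term.ConstsIn, hr]) ?_
    rintro ⟨g, t⟩
    have hfoldr : (List.ofFn g).foldr IA.times t =
        (List.ofFn fun i => g i.castSucc).foldr IA.times (IA.times (g (Fin.last n)) t) := by
      rw [List.ofFn_succ', List.concat_eq_append, List.foldr_concat]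
    have hw : IA.ev w [(List.ofFn g).foldr IA.times t] ≤
        IA.times (IA.iterTimes fun i => g i.castSucc) (IA.times (g (Fin.last n)) t) :=
      ev_app_le (hrle (fun i => g i.castSucc, IA.times (g (Fin.last n)) t)) hfoldr.le
    exact ev_abs_le (ev_pair_le (ev_pair_le (ev_fst_le hw) (ev_fst_le (ev_snd_le hw)))
      (ev_snd_le (ev_snd_le hw)))

section Interpretation

variable (IA) in
noncomputable def eqCtx {κ : Cardinal.{u}} {n : ℕ} (a b : Fin n → WSet A κ) : A :=
  IA.iterTimes fun i => IA.eqW (a i).1 (b i).1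

variable {κ : Cardinal.{u}} {n : ℕ}

theorem eqCtx_snoc (a b : Fin n → WSet A κ) (α β : WSet A κ) :
    IA.eqCtx (Fin.snoc a α) (Fin.snoc b β) = IA.times (IA.eqCtx a b) (IA.eqW α.1 β.1) := by
  simp [eqCtx, iterTimes]

theorem realized_eqCtx_proj (k : Fin n) :
    IA.Realized fun p : (Fin n → WSet A κ) × (Fin n → WSet A κ) =>
      IA.imp (IA.eqCtx p.1 p.2) (IA.eqW (p.1 k).1 (p.2 k).1) :=
  (realized_iterTimes_proj k).comp
    fun (p : (Fin n → WSet A κ) × (Fin n → WSet A κ)) i => IA.eqW (p.1 i).1 (p.2 i).1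

theorem realized_eqCtx_swap :
    IA.Realized fun p : (Fin n → WSet A κ) × (Fin n → WSet A κ) =>
      IA.imp (IA.eqCtx p.1 p.2) (IA.eqCtx p.2 p.1) := by
  obtain ⟨S, hS, hSle⟩ := exists_eqW_symm (IA := IA)
  exact realized_iterTimes_map fun k => ⟨S, hS, fun p => hSle _ _⟩

theorem realized_interp_congr_snoc {φ : SetFormula (n + 1)}
    (h : IA.Realized fun p : (Fin (n + 1) → WSet A κ) × (Fin (n + 1) → WSet A κ) =>
      IA.imp (IA.eqCtx p.1 p.2) (IA.imp (IA.interp κ φ p.1) (IA.interp κ φ p.2))) :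
    IA.Realized fun q : ((Fin n → WSet A κ) × (Fin n → WSet A κ)) × WSet A κ =>
      IA.imp (IA.eqCtx q.1.1 q.1.2)
        (IA.imp (IA.interp κ φ (Fin.snoc q.1.1 q.2)) (IA.interp κ φ (Fin.snoc q.1.2 q.2))) := by
  refine Realized.cut ?_ (realized_eqW_refl.comp fun q : _ × WSet A κ => q.2.1)
  simpa only [Function.comp_def, eqCtx_snoc] using
    h.comp fun q : ((Fin n → WSet A κ) × (Fin n → WSet A κ)) × WSet A κ =>
      (Fin.snoc q.1.1 q.2, Fin.snoc q.1.2 q.2)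

theorem realized_interp_congr : ∀ {n : ℕ} (φ : SetFormula n),
    IA.Realized fun p : (Fin n → WSet A κ) × (Fin n → WSet A κ) =>
      IA.imp (IA.eqCtx p.1 p.2) (IA.imp (IA.interp κ φ p.1) (IA.interp κ φ p.2))
  | _, .bot => realized_imp_imp_self
  | _, .mem i j => realized_memW_congr (realized_eqCtx_proj i) (realized_eqCtx_proj j)
  | _, .eq i j => realized_eqW_congr (realized_eqCtx_proj i) (realized_eqCtx_proj j)
  | _, .and φ ψ => realized_times_congr (realized_interp_congr φ) (realized_interp_congr ψ)
  | _, .or φ ψ => realized_plus_congr (realized_interp_congr φ) (realized_interp_congr ψ)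
  | _, .imp φ ψ => realized_imp_congr
      (realized_eqCtx_swap.imp_trans ((realized_interp_congr φ).comp Prod.swap))
      (realized_interp_congr ψ)
  | _, .ex φ => realized_aex_congr (realized_interp_congr_snoc (realized_interp_congr φ))
  | _, .all φ => realized_iInf_congr (realized_interp_congr_snoc (realized_interp_congr φ))

end Interpretation

end ImplicativeAlgebra

theorem stmt6_general {A : Type u} [CompleteLattice A] (IA : ImplicativeAlgebra A)
    (κ : Cardinal.{u}) (n : ℕ) (φ : SetFormula n) :
    ∃ r ∈ IA.Sig, r ≤ ⨅ a : Fin n → WSet A κ, ⨅ b : Fin n → WSet A κ,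
      IA.imp
        ((List.ofFn fun i : Fin n => IA.eqW (a i).1 (b i).1).foldr IA.times
          (IA.interp κ φ a))
        (IA.interp κ φ b) := by
  obtain ⟨r, hr, hrle⟩ := (ImplicativeAlgebra.realized_interp_congr φ).uncurry
    ((ImplicativeAlgebra.realized_foldr_times n).comp
      fun p : (Fin n → WSet A κ) × (Fin n → WSet A κ) =>
        (fun i => IA.eqW (p.1 i).1 (p.2 i).1, IA.interp κ φ p.1))
  exact ⟨r, hr, le_iInf₂ fun a b => hrle (a, b)⟩

theorem stmt6 {A : Type u} [CompleteLattice A] (IA : ImplicativeAlgebra A)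
    (κ : Cardinal.{u}) (hκ : κ.IsInaccessible) (hA : Cardinal.mk A < κ) (n : ℕ) (φ : SetFormula n) :
    ∃ r ∈ IA.Sig, r ≤ ⨅ a : Fin n → WSet A κ, ⨅ b : Fin n → WSet A κ,
      IA.imp
        ((List.ofFn fun i : Fin n => IA.eqW (a i).1 (b i).1).foldr IA.times
          (IA.interp κ φ a))
        (IA.interp κ φ b) :=
  stmt6_general IA κ n φ
end

section
/- Let 𝔸 = (A, ≤, →, Σ) be an implicative algebra with |A| < κ for a strongly inaccessible cardinal κ, and let W, ∈_W, =_W and the interpretation ‖·‖ be as defined below. For every formula in context φ[x̄, y, z] with x̄ of length n, writing ∃z∈y φ for ∃z(z ∈ y ∧ φ): ‖∃z∈y φ [x̄, y]‖ ≡_{Σ[W^{n+1}]} the function (ᾱ, β) ↦ ∃⃗_{u∈dom(β)} (β(u) × ‖φ[x̄, y, z]‖(ᾱ, β, u)). -/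
universe u

/-!
Implications are read through realizability: `f ⊢_{Σ[I]} g` holds as soon as a single element
of `Σ` lies below every `f i → g i`, and such uniform realizers are written as λ-terms with
constants in `Σ`, which denote elements of `Σ` by bracket abstraction into `K` and `S`.

Reflexivity and transitivity of `=_W` are realized by fixed points of Turing's combinator, the
recursion following the well-founded membership structure of `W`; together with symmetry they
make `∈_W` and `=_W` congruences, and then induction on formulas shows that every `‖φ‖` respects
`=_W` in each of its variables. Unfolding `∃z (z ∈ y ∧ φ)`, a witness `z` together with `y(s)`,
`y.s =_W z` and `φ(z)` gives `y(s) × φ(y.s)` by this transport, and conversely `y.s` is itself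
a witness for `z`, by reflexivity.
-/

namespace ImplicativeAlgebra

/-! ### Application and combinatory completeness -/

inductive CombTerm (A : Type u) : Type u
  | K : CombTerm A
  | S : CombTerm A
  | const (a : A) : CombTerm A
  | var (n : ℕ) : CombTerm A
  | app (t s : CombTerm A) : CombTerm A

namespace CombTerm

variable {A : Type u}

/-- Bracket abstraction of the variable `0`. -/
def abstract : CombTerm A → CombTerm A
  | var 0 => app (app S K) K
  | var (n + 1) => app K (var n)
  | app t s => app (app S t.abstract) s.abstract
  | t => app K t

def ConstsIn (X : Set A) : CombTerm A → Prop
  | const a => a ∈ X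
  | app t s => t.ConstsIn X ∧ s.ConstsIn X
  | _ => True

theorem constsIn_abstract {X : Set A} : ∀ {t : CombTerm A}, t.ConstsIn X → t.abstract.ConstsIn X
  | var 0, _ | var (_ + 1), _ | K, _ | S, _ => by simp [abstract, ConstsIn]
  | const _, h => ⟨trivial, h⟩
  | app _ _, ⟨ht, hs⟩ => ⟨⟨trivial, constsIn_abstract ht⟩, constsIn_abstract hs⟩

end CombTerm

/-- λ-terms with constants, in de Bruijn notation: `var 0` is the innermost bound variable. -/
inductive LamTerm (A : Type u) : Type u
  | const (a : A) : LamTerm A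
  | var (n : ℕ) : LamTerm A
  | app (t s : LamTerm A) : LamTerm A
  | lam (t : LamTerm A) : LamTerm A

infixl:70 " ⬝ " => LamTerm.app
notation:60 "ƛ " t:60 => LamTerm.lam t

namespace LamTerm

variable {A : Type u}

@[simp]
def ConstsIn (X : Set A) : LamTerm A → Prop
  | const a => a ∈ X
  | var _ => True
  | app t s => t.ConstsIn X ∧ s.ConstsIn X
  | lam t => t.ConstsIn X

def compile : LamTerm A → CombTerm A
  | const a => .const a
  | var n => .var n
  | app t s => .app t.compile s.compile
  | lam t => t.compile.abstract

theorem constsIn_compile {X : Set A} : ∀ {t : LamTerm A}, t.ConstsIn X → t.compile.ConstsIn X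
  | const _, h => h
  | var _, _ => trivial
  | app _ _, ⟨ht, hs⟩ => ⟨constsIn_compile ht, constsIn_compile hs⟩
  | lam _, h => CombTerm.constsIn_abstract (constsIn_compile h)

@[simp]
def pair (t s : LamTerm A) : LamTerm A := (ƛ ƛ ƛ var 0 ⬝ var 2 ⬝ var 1) ⬝ t ⬝ s

/-- `split t s` is `let ⟨x, y⟩ := t in s`, where `y` and `x` are the variables `0` and `1`
of `s`. -/
@[simp]
def split (t s : LamTerm A) : LamTerm A := t ⬝ (ƛ ƛ s)

@[simp]
def fst (t : LamTerm A) : LamTerm A := split t (var 1)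

@[simp]
def snd (t : LamTerm A) : LamTerm A := split t (var 0)

@[simp]
def exIntro (t : LamTerm A) : LamTerm A := (ƛ ƛ var 0 ⬝ var 1) ⬝ t

/-- `exSplit t s` is `let ⟨i, x, y⟩ := t in s`, where `y` and `x` are the variables `0` and `1`
of `s`. -/
@[simp]
def exSplit (t s : LamTerm A) : LamTerm A := t ⬝ ((ƛ ƛ var 0 ⬝ var 1) ⬝ (ƛ ƛ s))

/-- Turing's fixed point combinator `θ θ`, where `θ = λ z f. f (z z f)`. -/
@[simp]
def turing : LamTerm A :=
  (ƛ ƛ var 0 ⬝ (var 1 ⬝ var 1 ⬝ var 0)) ⬝ (ƛ ƛ var 0 ⬝ (var 1 ⬝ var 1 ⬝ var 0))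

end LamTerm

open scoped Stream'
open LamTerm

variable {A : Type u} [CompleteLattice A] (IA : ImplicativeAlgebra A)

local infixr:60 " ⇒ " => IA.imp

theorem top_mem_Sig : (⊤ : A) ∈ IA.Sig :=
  IA.Sig_upward IA.Sig_K le_top

def app (a b : A) : A := sInf {c | a ≤ b ⇒ c}

theorem le_imp_app (a b : A) : a ≤ b ⇒ IA.app a b := by
  rw [app, IA.imp_sInf]
  exact le_iInf₂ fun _ hc => hc

theorem app_le {a b c : A} (h : a ≤ b ⇒ c) : IA.app a b ≤ c := sInf_le h

theorem app_le_of_le_imp {a b p q : A} (ha : a ≤ p ⇒ q) (hb : b ≤ p) : IA.app a b ≤ q :=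
  IA.app_le (ha.trans (IA.imp_antitone hb))

theorem app_mono {a a' b b' : A} (ha : a ≤ a') (hb : b ≤ b') : IA.app a b ≤ IA.app a' b' :=
  IA.app_le_of_le_imp (ha.trans (IA.le_imp_app a' b')) hb

theorem app_mem_Sig {a b : A} (ha : a ∈ IA.Sig) (hb : b ∈ IA.Sig) : IA.app a b ∈ IA.Sig :=
  IA.Sig_mp (IA.Sig_upward ha (IA.le_imp_app a b)) hb

def K : A := ⨅ a : A, ⨅ b : A, a ⇒ b ⇒ a

def S : A := ⨅ a : A, ⨅ b : A, ⨅ c : A, (a ⇒ b ⇒ c) ⇒ (a ⇒ b) ⇒ a ⇒ c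

theorem app_app_K_le (a b : A) : IA.app (IA.app IA.K a) b ≤ a :=
  IA.app_le_of_le_imp (IA.app_le_of_le_imp (iInf₂_le a b) le_rfl) le_rfl

theorem app_app_app_S_le (a b c : A) :
    IA.app (IA.app (IA.app IA.S a) b) c ≤ IA.app (IA.app a c) (IA.app b c) := by
  have ha : a ≤ c ⇒ IA.app b c ⇒ IA.app (IA.app a c) (IA.app b c) :=
    (IA.le_imp_app a c).trans (IA.imp_monotone (IA.le_imp_app _ _))
  have hS : IA.S ≤ (c ⇒ IA.app b c ⇒ IA.app (IA.app a c) (IA.app b c)) ⇒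
      (c ⇒ IA.app b c) ⇒ c ⇒ IA.app (IA.app a c) (IA.app b c) :=
    iInf₂_le_of_le c (IA.app b c) (iInf_le _ _)
  exact IA.app_le_of_le_imp (IA.app_le_of_le_imp (IA.app_le_of_le_imp hS ha)
    (IA.le_imp_app b c)) le_rfl

def evalComb : CombTerm A → Stream' A → A
  | .K, _ => IA.K
  | .S, _ => IA.S
  | .const a, _ => a
  | .var n, env => env n
  | .app t s, env => IA.app (evalComb t env) (evalComb s env)

def eval : LamTerm A → Stream' A → A
  | .const a, _ => a
  | .var n, env => env n
  | .app t s, env => IA.app (eval t env) (eval s env)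
  | .lam t, env => ⨅ a : A, a ⇒ eval t (a :: env)

theorem app_evalComb_abstract_le (t : CombTerm A) (env : Stream' A) (a : A) :
    IA.app (IA.evalComb t.abstract env) a ≤ IA.evalComb t (a :: env) := by
  match t with
  | .var 0 => exact (IA.app_app_app_S_le _ _ a).trans (IA.app_app_K_le a _)
  | .var (n + 1) => exact IA.app_app_K_le (env n) a
  | .K => exact IA.app_app_K_le _ a
  | .S => exact IA.app_app_K_le _ a
  | .const b => exact IA.app_app_K_le b a
  | .app t s =>
    exact (IA.app_app_app_S_le _ _ a).trans
      (IA.app_mono (app_evalComb_abstract_le t env a) (app_evalComb_abstract_le s env a))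

theorem evalComb_compile_le (t : LamTerm A) (env : Stream' A) :
    IA.evalComb t.compile env ≤ IA.eval t env := by
  induction t generalizing env with
  | const a => exact le_rfl
  | var n => exact le_rfl
  | app t s iht ihs => exact IA.app_mono (iht env) (ihs env)
  | lam t iht =>
    exact le_iInf fun a => (IA.le_imp_app _ a).trans
      (IA.imp_monotone ((IA.app_evalComb_abstract_le _ env a).trans (iht _)))

theorem evalComb_mem_Sig {t : CombTerm A} (ht : t.ConstsIn IA.Sig) {env : Stream' A}
    (henv : ∀ n, env n ∈ IA.Sig) : IA.evalComb t env ∈ IA.Sig := by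
  induction t with
  | K => exact IA.Sig_K
  | S => exact IA.Sig_S
  | const a => exact ht
  | var n => exact henv n
  | app t s iht ihs => exact IA.app_mem_Sig (iht ht.1) (ihs ht.2)

theorem eval_mem_Sig {t : LamTerm A} (ht : t.ConstsIn IA.Sig) {env : Stream' A}
    (henv : ∀ n, env n ∈ IA.Sig) : IA.eval t env ∈ IA.Sig :=
  IA.Sig_upward (IA.evalComb_mem_Sig (constsIn_compile ht) henv) (IA.evalComb_compile_le t env)

section Typing

variable {IA} {env : Stream' A} {t s : LamTerm A} {a b p q x : A}

theorem eval_lam_le (h : IA.eval t (a :: env) ≤ b) : IA.eval (ƛ t) env ≤ a ⇒ b :=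
  (iInf_le _ a).trans (IA.imp_monotone h)

theorem eval_app_le (ht : IA.eval t env ≤ p ⇒ q) (hs : IA.eval s env ≤ p) :
    IA.eval (t ⬝ s) env ≤ q :=
  IA.app_le_of_le_imp ht hs

theorem app_eval_lam_le : IA.app (IA.eval (ƛ t) env) a ≤ IA.eval t (a :: env) :=
  IA.app_le (iInf_le _ a)

theorem eval_pair_le (ht : IA.eval t env ≤ p) (hs : IA.eval s env ≤ q) :
    IA.eval (pair t s) env ≤ IA.times p q :=
  eval_app_le (eval_app_le (eval_lam_le (eval_lam_le (le_iInf fun _ => eval_lam_le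
    (eval_app_le (p := q) (eval_app_le le_rfl le_rfl) le_rfl)))) ht) hs

theorem eval_split_le (ht : IA.eval t env ≤ IA.times p q)
    (hs : IA.eval s (q :: p :: env) ≤ x) : IA.eval (split t s) env ≤ x :=
  eval_app_le (ht.trans (iInf_le _ x)) (eval_lam_le (eval_lam_le hs))

theorem eval_fst_le (ht : IA.eval t env ≤ IA.times p q) : IA.eval (fst t) env ≤ p :=
  eval_split_le ht le_rfl

theorem eval_snd_le (ht : IA.eval t env ≤ IA.times p q) : IA.eval (snd t) env ≤ q :=
  eval_split_le ht le_rfl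

theorem eval_exIntro_le {ι : Sort*} {f : ι → A} (i : ι) (ht : IA.eval t env ≤ f i) :
    IA.eval (exIntro t) env ≤ IA.aex f :=
  eval_app_le (eval_lam_le (le_iInf fun _ => eval_lam_le (eval_app_le (iInf_le _ i) le_rfl))) ht

theorem eval_exSplit_le {ι : Sort*} {f g : ι → A}
    (ht : IA.eval t env ≤ IA.aex fun i => IA.times (f i) (g i))
    (hs : ∀ i, IA.eval s (g i :: f i :: env) ≤ x) : IA.eval (exSplit t s) env ≤ x := by
  refine eval_app_le (ht.trans (iInf_le _ x)) (le_iInf fun i => ?_)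
  exact eval_app_le (p := f i ⇒ g i ⇒ x)
    (eval_lam_le (eval_lam_le (eval_app_le (iInf_le _ x) le_rfl)))
    (eval_lam_le (eval_lam_le (hs i)))

theorem app_eval_turing_le :
    IA.app (IA.eval turing env) a ≤ IA.app a (IA.app (IA.eval turing env) a) :=
  (IA.app_mono app_eval_lam_le le_rfl).trans app_eval_lam_le

end Typing

abbrev eval₀ (t : LamTerm A) : A := IA.eval t (Stream'.const ⊤)

theorem eval₀_mem_Sig {t : LamTerm A} (ht : t.ConstsIn IA.Sig) : IA.eval₀ t ∈ IA.Sig :=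
  IA.eval_mem_Sig ht fun _ => IA.top_mem_Sig

def Valid {ι : Sort*} (f : ι → A) : Prop := ∃ r ∈ IA.Sig, ∀ i, r ≤ f i

theorem valid_of_eval₀_le {ι : Sort*} {f : ι → A} (t : LamTerm A) (ht : t.ConstsIn IA.Sig)
    (h : ∀ i, IA.eval₀ t ≤ f i) : IA.Valid f :=
  ⟨_, IA.eval₀_mem_Sig ht, h⟩

theorem sigLe_of_valid {ι : Sort*} {f g : ι → A} (h : IA.Valid fun i => f i ⇒ g i) :
    IA.SigLe f g :=
  let ⟨_, hr, hle⟩ := h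
  IA.Sig_upward hr (le_iInf hle)

def fix (s : A) : A := IA.app (IA.eval₀ turing) s

theorem fix_mem_Sig {s : A} (hs : s ∈ IA.Sig) : IA.fix s ∈ IA.Sig :=
  IA.app_mem_Sig (IA.eval₀_mem_Sig (by simp)) hs

theorem fix_le_of_step {P : PreW A → A} {s : A}
    (h : ∀ w x, (∀ i, x ≤ P (w.fam i)) → IA.app s x ≤ P w) (w : PreW A) :
    IA.fix s ≤ P w := by
  induction w with
  | mk ι f v ih => exact app_eval_turing_le.trans (h _ _ ih)

/-! ### `=_W` is a congruence for `∈_W` and `=_W` -/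

theorem eqW_eq_times (a b : PreW A) : IA.eqW a b = IA.times (IA.subW a b) (IA.subW b a) := by
  cases a; cases b; rw [eqW]; rfl

noncomputable def eqRefl : A :=
  IA.fix (IA.eval₀
    (ƛ pair (ƛ exIntro (pair (.var 0) (.var 1))) (ƛ exIntro (pair (.var 0) (.var 1)))))

@[simp]
theorem eqRefl_mem_Sig : IA.eqRefl ∈ IA.Sig :=
  IA.fix_mem_Sig (IA.eval₀_mem_Sig (by simp))

theorem eqRefl_le (w : PreW A) : IA.eqRefl ≤ IA.eqW w w := by
  refine IA.fix_le_of_step (P := fun w => IA.eqW w w) (fun w x hx => app_eval_lam_le.trans ?_) w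
  have hsub : IA.eval (ƛ exIntro (pair (.var 0) (.var 1))) (x :: Stream'.const ⊤) ≤
      IA.subW w w :=
    le_iInf fun t => eval_lam_le (eval_exIntro_le t (eval_pair_le le_rfl (hx t)))
  rw [IA.eqW_eq_times]
  exact eval_pair_le hsub hsub

noncomputable def eqSymm : A := IA.eval₀ (ƛ pair (snd (.var 0)) (fst (.var 0)))

@[simp]
theorem eqSymm_mem_Sig : IA.eqSymm ∈ IA.Sig := IA.eval₀_mem_Sig (by simp)

theorem eqSymm_le (a b : PreW A) : IA.eqSymm ≤ IA.eqW a b ⇒ IA.eqW b a := by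
  rw [IA.eqW_eq_times a b, IA.eqW_eq_times b a]
  exact eval_lam_le (eval_pair_le (eval_snd_le le_rfl) (eval_fst_le le_rfl))

noncomputable def eqTransAt (b : PreW A) : A :=
  ⨅ a, ⨅ c, IA.eqW a b ⇒ IA.eqW b c ⇒ IA.eqW a c

/-- `λ h m q. let ⟨s, x, e⟩ := m; let ⟨u, y, e'⟩ := q x; ⟨u, y, h e' e⟩`. -/
noncomputable def memOfMemSub : A :=
  IA.eval₀ (ƛ ƛ ƛ exSplit (.var 1)
    (exSplit (.var 2 ⬝ .var 1) (exIntro (pair (.var 1) (.var 6 ⬝ .var 0 ⬝ .var 2)))))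

@[simp]
theorem memOfMemSub_mem_Sig : IA.memOfMemSub ∈ IA.Sig := IA.eval₀_mem_Sig (by simp)

theorem memOfMemSub_le (b c y : PreW A) :
    IA.memOfMemSub ≤
      (⨅ s, IA.eqTransAt (b.fam s)) ⇒ IA.memW c b ⇒ IA.subW b y ⇒ IA.memW c y := by
  refine eval_lam_le (eval_lam_le (eval_lam_le (eval_exSplit_le le_rfl fun s =>
    eval_exSplit_le (eval_app_le (iInf_le _ s) le_rfl) fun u =>
      eval_exIntro_le u (eval_pair_le le_rfl ?_))))
  exact eval_app_le (eval_app_le ((iInf_le _ s).trans (iInf₂_le _ _)) le_rfl) le_rfl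

noncomputable def subTrans : A :=
  IA.eval₀ (ƛ ƛ ƛ ƛ .const IA.memOfMemSub ⬝ .var 3 ⬝ (.var 2 ⬝ .var 0) ⬝ .var 1)

@[simp]
theorem subTrans_mem_Sig : IA.subTrans ∈ IA.Sig := IA.eval₀_mem_Sig (by simp)

theorem subTrans_le (x b y : PreW A) :
    IA.subTrans ≤
      (⨅ s, IA.eqTransAt (b.fam s)) ⇒ IA.subW x b ⇒ IA.subW b y ⇒ IA.subW x y :=
  eval_lam_le (eval_lam_le (eval_lam_le (le_iInf fun t => eval_lam_le (eval_app_le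
    (eval_app_le (eval_app_le (IA.memOfMemSub_le b (x.fam t) y) le_rfl)
      (eval_app_le (iInf_le _ t) le_rfl)) le_rfl))))

/-- Built by recursion on the middle element `b` of `a = b → b = c → a = c`. -/
noncomputable def eqTrans : A :=
  IA.fix (IA.eval₀ (ƛ ƛ ƛ
    pair (.const IA.subTrans ⬝ .var 2 ⬝ fst (.var 1) ⬝ fst (.var 0))
      (.const IA.subTrans ⬝ .var 2 ⬝ snd (.var 0) ⬝ snd (.var 1))))

@[simp]
theorem eqTrans_mem_Sig : IA.eqTrans ∈ IA.Sig := IA.fix_mem_Sig (IA.eval₀_mem_Sig (by simp))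

theorem eqTrans_le (b : PreW A) : IA.eqTrans ≤ IA.eqTransAt b := by
  refine IA.fix_le_of_step (P := IA.eqTransAt)
    (fun b x hx => app_eval_lam_le.trans (le_iInf₂ fun a c => ?_)) b
  rw [IA.eqW_eq_times a b, IA.eqW_eq_times b c, IA.eqW_eq_times a c]
  exact eval_lam_le (eval_lam_le (eval_pair_le
    (eval_app_le (eval_app_le (eval_app_le (IA.subTrans_le a b c) (le_iInf hx))
      (eval_fst_le le_rfl)) (eval_fst_le le_rfl))
    (eval_app_le (eval_app_le (eval_app_le (IA.subTrans_le c b a) (le_iInf hx))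
      (eval_snd_le le_rfl)) (eval_snd_le le_rfl))))

theorem eqTrans_le_imp (a b c : PreW A) :
    IA.eqTrans ≤ IA.eqW a b ⇒ IA.eqW b c ⇒ IA.eqW a c :=
  (IA.eqTrans_le b).trans
    (iInf₂_le (f := fun a c => IA.eqW a b ⇒ IA.eqW b c ⇒ IA.eqW a c) a c)

noncomputable def eqCongr : A :=
  IA.eval₀ (ƛ ƛ ƛ .const IA.eqTrans ⬝ .var 2 ⬝
    (.const IA.eqTrans ⬝ .var 0 ⬝ (.const IA.eqSymm ⬝ .var 1)))

@[simp]
theorem eqCongr_mem_Sig : IA.eqCongr ∈ IA.Sig := IA.eval₀_mem_Sig (by simp)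

theorem eqCongr_le (a a' b b' : PreW A) :
    IA.eqCongr ≤ IA.eqW a' a ⇒ IA.eqW b' b ⇒ IA.eqW a b ⇒ IA.eqW a' b' :=
  eval_lam_le (eval_lam_le (eval_lam_le (eval_app_le (eval_app_le (IA.eqTrans_le_imp a' a b')
    le_rfl) (eval_app_le (eval_app_le (IA.eqTrans_le_imp a b b') le_rfl)
      (eval_app_le (IA.eqSymm_le b' b) le_rfl)))))

/-- `λ e₁ e₂ m. let ⟨s, x, e⟩ := memOfMemSub eqTrans m e₂.2; ⟨s, x, eqTrans e (eqSymm e₁)⟩` -/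
noncomputable def memCongr : A :=
  IA.eval₀ (ƛ ƛ ƛ
    exSplit (.const IA.memOfMemSub ⬝ .const IA.eqTrans ⬝ .var 0 ⬝ snd (.var 1))
      (exIntro (pair (.var 1) (.const IA.eqTrans ⬝ .var 0 ⬝ (.const IA.eqSymm ⬝ .var 4)))))

@[simp]
theorem memCongr_mem_Sig : IA.memCongr ∈ IA.Sig := IA.eval₀_mem_Sig (by simp)

theorem memCongr_le (a a' b b' : PreW A) :
    IA.memCongr ≤ IA.eqW a' a ⇒ IA.eqW b' b ⇒ IA.memW a b ⇒ IA.memW a' b' := by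
  refine eval_lam_le (eval_lam_le (eval_lam_le (eval_exSplit_le (f := b'.val)
    (g := fun s => IA.eqW (b'.fam s) a) ?_ fun s =>
    eval_exIntro_le s (eval_pair_le le_rfl ?_))))
  · exact eval_app_le (eval_app_le (eval_app_le (IA.memOfMemSub_le b a b')
      (le_iInf fun s => IA.eqTrans_le _)) le_rfl) (eval_snd_le (IA.eqW_eq_times b' b).le)
  · exact eval_app_le (eval_app_le (IA.eqTrans_le_imp _ a a') le_rfl)
      (eval_app_le (IA.eqSymm_le a' a) le_rfl)

/-! ### Uniform reasoning under a hypothesis -/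

section Logic

variable {IA} {ι J : Type*} {e a a' b b' : ι → A}

theorem Valid.of_comp_le {f : ι → A} {g : J → A} (h : IA.Valid f) (σ : J → ι)
    (hle : ∀ j, f (σ j) ≤ g j) : IA.Valid g :=
  let ⟨r, hr, hrf⟩ := h
  ⟨r, hr, fun j => (hrf (σ j)).trans (hle j)⟩

variable (IA) in
theorem valid_imp_imp_self : IA.Valid fun i => e i ⇒ a i ⇒ a i :=
  IA.valid_of_eval₀_le (ƛ ƛ .var 0) trivial fun _ => eval_lam_le (eval_lam_le le_rfl)

theorem Valid.times_congr (ha : IA.Valid fun i => e i ⇒ a i ⇒ a' i)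
    (hb : IA.Valid fun i => e i ⇒ b i ⇒ b' i) :
    IA.Valid fun i => e i ⇒ IA.times (a i) (b i) ⇒ IA.times (a' i) (b' i) := by
  obtain ⟨r, hr, hra⟩ := ha
  obtain ⟨s, hs, hsb⟩ := hb
  refine IA.valid_of_eval₀_le
    (ƛ ƛ split (.var 0) (pair (.const r ⬝ .var 3 ⬝ .var 1) (.const s ⬝ .var 3 ⬝ .var 0)))
    (by simp [hr, hs]) fun i => ?_
  exact eval_lam_le (eval_lam_le (eval_split_le le_rfl (eval_pair_le
    (eval_app_le (eval_app_le (hra i) le_rfl) le_rfl)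
    (eval_app_le (eval_app_le (hsb i) le_rfl) le_rfl))))

theorem Valid.plus_congr (ha : IA.Valid fun i => e i ⇒ a i ⇒ a' i)
    (hb : IA.Valid fun i => e i ⇒ b i ⇒ b' i) :
    IA.Valid fun i => e i ⇒ IA.plus (a i) (b i) ⇒ IA.plus (a' i) (b' i) := by
  obtain ⟨r, hr, hra⟩ := ha
  obtain ⟨s, hs, hsb⟩ := hb
  refine IA.valid_of_eval₀_le
    (ƛ ƛ ƛ ƛ .var 2 ⬝ (ƛ .var 2 ⬝ (.const r ⬝ .var 4 ⬝ .var 0))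
      ⬝ (ƛ .var 1 ⬝ (.const s ⬝ .var 4 ⬝ .var 0))) (by simp [hr, hs]) fun i => ?_
  refine eval_lam_le (eval_lam_le (le_iInf fun x => eval_lam_le (eval_lam_le ?_)))
  exact eval_app_le (eval_app_le (iInf_le _ x)
    (eval_lam_le (eval_app_le le_rfl (eval_app_le (eval_app_le (hra i) le_rfl) le_rfl))))
    (eval_lam_le (eval_app_le le_rfl (eval_app_le (eval_app_le (hsb i) le_rfl) le_rfl)))

theorem Valid.imp_congr (ha : IA.Valid fun i => e i ⇒ a' i ⇒ a i)
    (hb : IA.Valid fun i => e i ⇒ b i ⇒ b' i) :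
    IA.Valid fun i => e i ⇒ (a i ⇒ b i) ⇒ (a' i ⇒ b' i) := by
  obtain ⟨r, hr, hra⟩ := ha
  obtain ⟨s, hs, hsb⟩ := hb
  refine IA.valid_of_eval₀_le
    (ƛ ƛ ƛ .const s ⬝ .var 2 ⬝ (.var 1 ⬝ (.const r ⬝ .var 2 ⬝ .var 0)))
    (by simp [hr, hs]) fun i => ?_
  exact eval_lam_le (eval_lam_le (eval_lam_le (eval_app_le (eval_app_le (hsb i) le_rfl)
    (eval_app_le le_rfl (eval_app_le (eval_app_le (hra i) le_rfl) le_rfl)))))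

theorem Valid.aex_congr {a a' : ι → J → A}
    (h : IA.Valid fun p : ι × J => e p.1 ⇒ a p.1 p.2 ⇒ a' p.1 p.2) :
    IA.Valid fun i => e i ⇒ IA.aex (a i) ⇒ IA.aex (a' i) := by
  obtain ⟨r, hr, hra⟩ := h
  refine IA.valid_of_eval₀_le (ƛ ƛ .var 0 ⬝ (ƛ exIntro (.const r ⬝ .var 2 ⬝ .var 0)))
    (by simp [hr]) fun i => ?_
  exact eval_lam_le (eval_lam_le (eval_app_le (iInf_le _ _) (le_iInf fun j => eval_lam_le
    (eval_exIntro_le j (eval_app_le (eval_app_le (hra (i, j)) le_rfl) le_rfl)))))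

theorem Valid.iInf_congr {a a' : ι → J → A}
    (h : IA.Valid fun p : ι × J => e p.1 ⇒ a p.1 p.2 ⇒ a' p.1 p.2) :
    IA.Valid fun i => e i ⇒ (⨅ j, a i j) ⇒ ⨅ j, a' i j := by
  obtain ⟨r, hr, hra⟩ := h
  refine IA.valid_of_eval₀_le (ƛ ƛ .const r ⬝ .var 1 ⬝ .var 0) (by simp [hr]) fun i => ?_
  exact eval_lam_le (eval_lam_le (le_iInf fun j =>
    eval_app_le (eval_app_le (hra (i, j)) le_rfl) (iInf_le _ j)))

end Logic

/-! ### Leibniz's law for interpreted formulas -/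

section Formulas

variable (κ : Cardinal.{u}) {m : ℕ}

def Extensional (φ : SetFormula m) (i : Fin m) : Prop :=
  IA.Valid fun p : (Fin m → WSet A κ) × WSet A κ =>
    IA.eqW p.2.1 (p.1 i).1 ⇒ IA.interp κ φ p.1 ⇒ IA.interp κ φ (Function.update p.1 i p.2)

theorem valid_eqW_update (i j : Fin m) :
    IA.Valid fun p : (Fin m → WSet A κ) × WSet A κ =>
      IA.eqW p.2.1 (p.1 i).1 ⇒ IA.eqW (Function.update p.1 i p.2 j).1 (p.1 j).1 := by
  by_cases hji : j = i
  · subst hji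
    refine IA.valid_of_eval₀_le (ƛ .var 0) trivial fun p => ?_
    rw [Function.update_self]
    exact eval_lam_le le_rfl
  · refine IA.valid_of_eval₀_le (ƛ .const IA.eqRefl) (by simp) fun p => ?_
    rw [Function.update_of_ne hji]
    exact eval_lam_le (IA.eqRefl_le _)

theorem extensional_mem (i j k : Fin m) : IA.Extensional κ (.mem j k) i := by
  obtain ⟨r, hr, hrj⟩ := IA.valid_eqW_update κ i j
  obtain ⟨s, hs, hsk⟩ := IA.valid_eqW_update κ i k
  refine IA.valid_of_eval₀_le
    (ƛ ƛ .const IA.memCongr ⬝ (.const r ⬝ .var 1) ⬝ (.const s ⬝ .var 1) ⬝ .var 0)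
    (by simp [hr, hs]) fun p => ?_
  exact eval_lam_le (eval_lam_le (eval_app_le (eval_app_le (eval_app_le (IA.memCongr_le _ _ _ _)
    (eval_app_le (hrj p) le_rfl)) (eval_app_le (hsk p) le_rfl)) le_rfl))

theorem extensional_eq (i j k : Fin m) : IA.Extensional κ (.eq j k) i := by
  obtain ⟨r, hr, hrj⟩ := IA.valid_eqW_update κ i j
  obtain ⟨s, hs, hsk⟩ := IA.valid_eqW_update κ i k
  refine IA.valid_of_eval₀_le
    (ƛ ƛ .const IA.eqCongr ⬝ (.const r ⬝ .var 1) ⬝ (.const s ⬝ .var 1) ⬝ .var 0)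
    (by simp [hr, hs]) fun p => ?_
  exact eval_lam_le (eval_lam_le (eval_app_le (eval_app_le (eval_app_le (IA.eqCongr_le _ _ _ _)
    (eval_app_le (hrj p) le_rfl)) (eval_app_le (hsk p) le_rfl)) le_rfl))

variable {IA κ}

theorem Extensional.symm {φ : SetFormula m} {i : Fin m} (h : IA.Extensional κ φ i) :
    IA.Valid fun p : (Fin m → WSet A κ) × WSet A κ =>
      IA.eqW p.2.1 (p.1 i).1 ⇒ IA.interp κ φ (Function.update p.1 i p.2) ⇒
        IA.interp κ φ p.1 := by
  obtain ⟨r, hr, hrφ⟩ := h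
  refine IA.valid_of_eval₀_le (ƛ .const r ⬝ (.const IA.eqSymm ⬝ .var 0)) (by simp [hr])
    fun p => eval_lam_le (eval_app_le ?_ (eval_app_le (IA.eqSymm_le _ _) le_rfl))
  show r ≤ _
  simpa using hrφ (Function.update p.1 i p.2, p.1 i)

theorem Extensional.snoc {φ : SetFormula (m + 1)} {i : Fin m}
    (h : IA.Extensional κ φ i.castSucc) :
    IA.Valid fun q : ((Fin m → WSet A κ) × WSet A κ) × WSet A κ =>
      IA.eqW q.1.2.1 (q.1.1 i).1 ⇒ IA.interp κ φ (Fin.snoc q.1.1 q.2) ⇒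
        IA.interp κ φ (Fin.snoc (Function.update q.1.1 i q.1.2) q.2) :=
  h.of_comp_le (fun q => (Fin.snoc q.1.1 q.2, q.1.2)) fun q => by
    dsimp only
    rw [Fin.snoc_castSucc, ← Fin.snoc_update]

variable (IA κ)

theorem extensional (φ : SetFormula m) (i : Fin m) : IA.Extensional κ φ i := by
  induction φ with
  | bot => exact IA.valid_imp_imp_self
  | mem j k => exact IA.extensional_mem κ i j k
  | eq j k => exact IA.extensional_eq κ i j k
  | and φ ψ ihφ ihψ => exact (ihφ i).times_congr (ihψ i)
  | or φ ψ ihφ ihψ => exact (ihφ i).plus_congr (ihψ i)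
  | imp φ ψ ihφ ihψ => exact (ihφ i).symm.imp_congr (ihψ i)
  | ex φ ih => exact (ih i.castSucc).snoc.aex_congr
  | all φ ih => exact (ih i.castSucc).snoc.iInf_congr

end Formulas

theorem sigEquiv_aex_memW_times {κ : Cardinal.{u}} {ι : Type*} (y : ι → WSet A κ)
    (g : ι → WSet A κ → A)
    (hg : IA.Valid fun p : ι × WSet A κ × WSet A κ =>
      IA.eqW p.2.2.1 p.2.1.1 ⇒ g p.1 p.2.1 ⇒ g p.1 p.2.2) :
    IA.SigEquiv (fun i => IA.aex fun β => IA.times (IA.memW β.1 (y i).1) (g i β))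
      (fun i => IA.aex fun u => IA.times ((y i).1.val u) (g i ((y i).fam u))) := by
  obtain ⟨r, hr, hrg⟩ := hg
  constructor
  · refine IA.sigLe_of_valid (IA.valid_of_eval₀_le (ƛ exSplit (.var 0)
      (exSplit (.var 1) (exIntro (pair (.var 1) (.const r ⬝ .var 0 ⬝ .var 2)))))
      (by simp [hr]) fun i => ?_)
    exact eval_lam_le (eval_exSplit_le le_rfl fun β => eval_exSplit_le le_rfl fun s =>
      eval_exIntro_le s (eval_pair_le le_rfl
        (eval_app_le (eval_app_le (hrg (i, β, (y i).fam s)) le_rfl) le_rfl)))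
  · refine IA.sigLe_of_valid (IA.valid_of_eval₀_le (ƛ exSplit (.var 0)
      (exIntro (pair (exIntro (pair (.var 1) (.const IA.eqRefl))) (.var 0))))
      (by simp) fun i => ?_)
    exact eval_lam_le (eval_exSplit_le le_rfl fun u => eval_exIntro_le ((y i).fam u)
      (eval_pair_le (eval_exIntro_le u (eval_pair_le le_rfl (IA.eqRefl_le _))) le_rfl))

end ImplicativeAlgebra

theorem stmt8_general {A : Type u} [CompleteLattice A] (IA : ImplicativeAlgebra A)
    (κ : Cardinal.{u}) (n : ℕ) (φ : SetFormula (n + 2)) :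
    IA.SigEquiv
      (fun v : Fin (n + 1) → WSet A κ =>
        IA.interp κ
          (SetFormula.ex
            ((SetFormula.mem (Fin.last (n + 1)) ((Fin.last n).castSucc)).and φ)) v)
      (fun v : Fin (n + 1) → WSet A κ =>
        IA.aex fun u : (v (Fin.last n)).1.dom =>
          IA.times ((v (Fin.last n)).1.val u)
            (IA.interp κ φ (Fin.snoc v ((v (Fin.last n)).fam u)))) := by
  simp only [ImplicativeAlgebra.interp, Fin.snoc_last, Fin.snoc_castSucc]
  refine IA.sigEquiv_aex_memW_times (ι := Fin (n + 1) → WSet A κ) (fun v => v (Fin.last n))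
    (fun v β => IA.interp κ φ (Fin.snoc v β)) ?_
  exact (IA.extensional κ φ (Fin.last (n + 1))).of_comp_le
    (fun p => (Fin.snoc p.1 p.2.1, p.2.2)) fun p => by simp [Fin.update_snoc_last]

theorem stmt8 {A : Type u} [CompleteLattice A] (IA : ImplicativeAlgebra A)
    (κ : Cardinal.{u}) (hκ : κ.IsInaccessible) (hA : Cardinal.mk A < κ) (n : ℕ) (φ : SetFormula (n + 2)) :
    IA.SigEquiv
      (fun v : Fin (n + 1) → WSet A κ =>
        IA.interp κ
          (SetFormula.ex
            ((SetFormula.mem (Fin.last (n + 1)) ((Fin.last n).castSucc)).and φ)) v)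
      (fun v : Fin (n + 1) → WSet A κ =>
        IA.aex fun u : (v (Fin.last n)).1.dom =>
          IA.times ((v (Fin.last n)).1.val u)
            (IA.interp κ φ (Fin.snoc v ((v (Fin.last n)).fam u)))) :=
  stmt8_general IA κ n φ
end
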